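/- There exist a function g : D → ℝ and a constant C > 0 such that for every ω̂ ∈ D and every n ≥ 4, |log q̂_n(ω̂⁺) − S_n(ψ)(ω̂) − g(ω̂)| ≤ C·3^{−n/3}. In particular, the functions g_n(ω̂) = log q̂_n(ω̂⁺) − S_n(ψ)(ω̂) converge to g uniformly on D and exponentially fast in n. -/

import Mathlib

open MeasureTheory Filter

noncomputable section

/-- The alphabet `Σ = ℕ₀ × ((ℕ × {±1}) ∖ {(1,-1)})`, as a subset of `ℕ × (ℕ × ℤ)`. -/
def SigmaSymb : Set (ℕ × (ℕ × ℤ)) :=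
  {s | 1 ≤ s.2.1 ∧ ((s.2.2 = 1 ∨ s.2.2 = -1) ∧ ¬(s.2.1 = 1 ∧ s.2.2 = -1))}

/-- The space `D = Σ^ℤ` of bi-infinite sequences of symbols. -/
def DSpace : Type := {ω : ℤ → ℕ × (ℕ × ℤ) // ∀ n, ω n ∈ SigmaSymb}

/-- `h`-component of the `n`-th symbol. -/
def hF (ω : DSpace) (n : ℤ) : ℕ := (ω.1 n).1

/-- `m`-component of the `n`-th symbol. -/
def mF (ω : DSpace) (n : ℤ) : ℕ := (ω.1 n).2.1

/-- sign component of the `n`-th symbol. -/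
def eF (ω : DSpace) (n : ℤ) : ℤ := (ω.1 n).2.2

/-- `ν_0 = 1`, `ν_n = ν_{n-1} + h_n + 1`, extended to all of `ℤ`. -/
def nuF (ω : DSpace) (n : ℤ) : ℤ :=
  if 0 ≤ n then 1 + ∑ j ∈ Finset.Icc 1 n.toNat, ((hF ω j : ℤ) + 1)
  else 1 - ∑ j ∈ Finset.range (-n).toNat, ((hF ω (-(j : ℤ)) : ℤ) + 1)

open Classical in
/-- Decoded digit `k_i(ω̂)`: symbol `σ_n` occupies digit indices `ν_{n-1}, …, ν_n - 1`,
as `h_n` copies of `(1,-1)` followed by `(m_n, ε_n)`. -/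
def kF (ω : DSpace) (i : ℤ) : ℕ :=
  if h : ∃ n : ℤ, nuF ω n - 1 = i then mF ω h.choose else 1

open Classical in
/-- Decoded digit `ξ_i(ω̂)`. -/
def xiF (ω : DSpace) (i : ℤ) : ℤ :=
  if h : ∃ n : ℤ, nuF ω n - 1 = i then eF ω h.choose else -1

/-- The finite backward continued fractions
`2k_i + ξ_{i-1}/(2k_{i-1} + ⋯ + ξ_{i-r}/(2k_{i-r}))`. -/
def backCF (k : ℤ → ℕ) (ξ : ℤ → ℤ) : ℕ → ℤ → ℝ
  | 0, i => 2 * (k i : ℝ)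
  | (r+1), i => 2 * (k i : ℝ) + (ξ (i-1) : ℝ) / backCF k ξ r (i-1)

/-- `y_i(ω̂)`, the limit of the finite backward continued fractions. -/
def yF (ω : DSpace) (i : ℤ) : ℝ :=
  limUnder atTop (fun r => backCF (kF ω) (xiF ω) r i)

/-- The roof function `ψ(ω̂) = ∑_{i=2}^{ν₁(ω̂)} log y_i(ω̂)`. -/
def psiF (ω : DSpace) : ℝ := ∑ i ∈ Finset.Icc (2:ℤ) (nuF ω 1), Real.log (yF ω i)

/-- The invertible left shift `R̂` on `D`. -/
def shiftD (ω : DSpace) : DSpace := ⟨fun n => ω.1 (n+1), fun n => ω.2 (n+1)⟩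

/-- Birkhoff sums `S_n(ψ)(ω̂) = ∑_{j=0}^{n-1} ψ(R̂^j ω̂)`. -/
def birkhoffPsi (ω : DSpace) (n : ℕ) : ℝ := ∑ j ∈ Finset.range n, psiF (shiftD^[j] ω)

/-- Numerators `p_n = 2 k_n p_{n-1} + ξ_{n-1} p_{n-2}`, `p_0 = 0`, `p_{-1} = 1`. -/
def cfP (k : ℕ → ℕ) (ξ : ℕ → ℤ) : ℕ → ℤ
  | 0 => 0
  | 1 => ξ 0
  | (n+2) => 2 * (k (n+2) : ℤ) * cfP k ξ (n+1) + ξ (n+1) * cfP k ξ n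

/-- Denominators `q_n = 2 k_n q_{n-1} + ξ_{n-1} q_{n-2}`, `q_0 = 1`, `q_{-1} = 0`. -/
def cfQ (k : ℕ → ℕ) (ξ : ℕ → ℤ) : ℕ → ℤ
  | 0 => 1
  | 1 => 2 * (k 1 : ℤ)
  | (n+2) => 2 * (k (n+2) : ℤ) * cfQ k ξ (n+1) + ξ (n+1) * cfQ k ξ n

/-- Forward digit sequence of `ω̂⁺`: digits with indices `≥ 1` (with convention `ξ_0 = 1`). -/
def kPlus (ω : DSpace) (n : ℕ) : ℕ := kF ω (n : ℤ)

def xiPlus (ω : DSpace) (n : ℕ) : ℤ := if n = 0 then 1 else xiF ω (n : ℤ)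

/-- The ECF convergent numerators `p_i(ω̂⁺)` of the forward point. -/
def pPlus (ω : DSpace) : ℕ → ℤ := cfP (kPlus ω) (xiPlus ω)

/-- The ECF convergent denominators `q_i(ω̂⁺)` of the forward point. -/
def qPlus (ω : DSpace) : ℕ → ℤ := cfQ (kPlus ω) (xiPlus ω)

/-- The `R`-denominators `q̂_n(ω̂⁺) = q_{ν_n}(ω̂⁺)` of the forward point. -/
def qhatF (ω : DSpace) (n : ℕ) : ℤ :=
  if n = 0 then 1 else qPlus ω (nuF ω n).toNat

end

/-!
Write `V r i` for the depth-`r` truncation of `y_i`. Then `q_{m+1} = V m (m+1) · q_m`, so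
`log q̂_n(ω̂⁺) - S_n(ψ)(ω̂)` is `log q_1` plus the sum of `log V m (m+1) - log y_{m+1}` over
`1 ≤ m < ν_n`. One more step of the backward recursion sends two truncations at index `i` to two at
index `i + 1` and divides their distance by the product of their values. These values are at least
`1`, and only runs of the parabolic digit `(1,-1)` push them towards `1`; as every symbol ends with
a digit other than `(1,-1)`, the values at distance `s` past `ν_n` are at least `(s+3)/(s+2)`.
Along one symbol the contraction factors therefore multiply to at most `4/9`, so the terms coming
from `σ_{n+1}` add up to `O((4/9)^n)` and the partial sums converge geometrically; finally
`4/9 ≤ 3^{-1/3}`.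
-/

open Finset Topology

lemma abs_log_sub_log_le {x y : ℝ} (hx : 1 ≤ x) (hy : 1 ≤ y) :
    |Real.log x - Real.log y| ≤ |x - y| := by
  wlog h : x ≤ y generalizing x y
  · rw [abs_sub_comm, abs_sub_comm x]; exact this hy hx (le_of_not_ge h)
  rw [abs_sub_comm, abs_of_nonneg (sub_nonneg.2 (Real.log_le_log (by linarith) h)), abs_sub_comm,
    abs_of_nonneg (by linarith), ← Real.log_div (by positivity) (by positivity)]
  calc Real.log (y / x) ≤ y / x - 1 := Real.log_le_sub_one_of_pos (by positivity)
    _ = (y - x) / x := by field_simp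
    _ ≤ y - x := div_le_self (by linarith) hx

lemma sum_range_two_div_sq_le (M : ℕ) : ∑ t ∈ range M, (2 / ((t : ℝ) + 3)) ^ 2 ≤ 2 := by
  set f : ℕ → ℝ := fun t => 1 / ((t : ℝ) + 2)
  calc ∑ t ∈ range M, (2 / ((t : ℝ) + 3)) ^ 2 ≤ ∑ t ∈ range M, 4 * (f t - f (t + 1)) := by
        refine sum_le_sum fun t _ => ?_
        simp only [f]
        rw [div_pow, div_le_iff₀ (by positivity)]
        push_cast
        field_simp
        nlinarith
    _ = 4 * (1 / 2 - f M) := by rw [← mul_sum, sum_range_sub']; norm_num [f]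
    _ ≤ 2 := by linarith [show 0 ≤ f M by positivity]

lemma four_ninths_pow_le_rpow (n : ℕ) : (4 / 9 : ℝ) ^ n ≤ 3 ^ (-(n : ℝ) / 3) := by
  rw [show -(n : ℝ) / 3 = (-1 / 3) * n by ring, Real.rpow_mul_natCast (by norm_num)]
  refine pow_le_pow_left₀ (by norm_num) ?_ n
  refine le_of_pow_le_pow_left₀ (n := 3) (by norm_num) (by positivity) ?_
  rw [← Real.rpow_mul_natCast (by norm_num)]
  norm_num

section BackwardContinuedFraction

variable {k : ℤ → ℕ} {ξ : ℤ → ℤ}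

structure IsECFDigitSeq (k : ℤ → ℕ) (ξ : ℤ → ℤ) : Prop where
  one_le : ∀ i, 1 ≤ k i
  sign : ∀ i, ξ i = 1 ∨ ξ i = -1

/-- At a parabolic index the step `x ↦ 2 k_i + ξ_{i-1} / x` is `x ↦ 2 - 1 / x`, which has the
neutral fixed point `1`. -/
def IsParabolicAt (k : ℤ → ℕ) (ξ : ℤ → ℤ) (i : ℤ) : Prop := k i = 1 ∧ ξ (i - 1) = -1

lemma backCF_zero (i : ℤ) : backCF k ξ 0 i = 2 * k i := rfl

lemma backCF_succ (r : ℕ) (i : ℤ) :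
    backCF k ξ (r + 1) i = 2 * k i + ξ (i - 1) / backCF k ξ r (i - 1) := rfl

lemma backCF_comp_add (c : ℤ) (r : ℕ) (i : ℤ) :
    backCF (fun i => k (i + c)) (fun i => ξ (i + c)) r i = backCF k ξ r (i + c) := by
  induction r generalizing i with
  | zero => rfl
  | succ r ih => rw [backCF_succ, backCF_succ, ih, sub_add_eq_add_sub]

lemma abs_sign_div_le_one (hd : IsECFDigitSeq k ξ) (i : ℤ) {v : ℝ} (hv : 1 ≤ v) :
    |(ξ i : ℝ) / v| ≤ 1 := by
  rw [abs_div, abs_of_pos (by linarith : 0 < v), div_le_one (by linarith)]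
  rcases hd.sign i with h | h <;> simp [h, hv]

lemma IsECFDigitSeq.one_le_cast (hd : IsECFDigitSeq k ξ) (i : ℤ) : (1 : ℝ) ≤ k i := by
  exact_mod_cast hd.one_le i

lemma one_le_backCF (hd : IsECFDigitSeq k ξ) (r : ℕ) (i : ℤ) : 1 ≤ backCF k ξ r i := by
  induction r generalizing i with
  | zero => rw [backCF_zero]; linarith [hd.one_le_cast i]
  | succ r ih =>
    have hdiv := abs_le.1 (abs_sign_div_le_one hd (i - 1) (ih (i - 1)))
    rw [backCF_succ]; linarith [hd.one_le_cast i]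

lemma two_le_backCF (hd : IsECFDigitSeq k ξ) {r : ℕ} {i : ℤ}
    (h : r = 0 ∨ ¬ IsParabolicAt k ξ i) : 2 ≤ backCF k ξ r i := by
  rcases r with _ | r
  · rw [backCF_zero]; linarith [hd.one_le_cast i]
  have hv := one_le_backCF hd r (i - 1)
  have hP : ¬ IsParabolicAt k ξ i := h.resolve_left (Nat.succ_ne_zero r)
  rw [backCF_succ]
  by_cases hk1 : k i = 1
  · have hξ1 : ξ (i - 1) = 1 := (hd.sign (i - 1)).resolve_right fun h' => hP ⟨hk1, h'⟩
    have : (0 : ℝ) ≤ 1 / backCF k ξ r (i - 1) := by positivity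
    rw [hk1, hξ1]; push_cast; linarith
  · have hk2 : (2 : ℝ) ≤ k i := by
      exact_mod_cast (Nat.two_le_iff _).2 ⟨Nat.one_le_iff_ne_zero.1 (hd.one_le i), hk1⟩
    have hdiv := abs_le.1 (abs_sign_div_le_one hd (i - 1) hv)
    linarith

lemma div_le_backCF (hd : IsECFDigitSeq k ξ) (s r : ℕ) (i : ℤ)
    (h : r ≤ s ∨ ¬ IsParabolicAt k ξ (i - s)) : ((s : ℝ) + 2) / (s + 1) ≤ backCF k ξ r i := by
  induction s generalizing r i with
  | zero => simpa using two_le_backCF hd (by simpa using h)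
  | succ s ih =>
    push_cast
    by_cases hP : IsParabolicAt k ξ i
    · rcases r with _ | r
      · refine le_trans ?_ (two_le_backCF hd (Or.inl rfl))
        rw [div_le_iff₀ (by positivity)]; linarith
      · have hv := ih r (i - 1) (by push_cast at h; rwa [sub_sub, add_comm (1 : ℤ)])
        have hinv : 1 / backCF k ξ r (i - 1) ≤ ((s : ℝ) + 1) / (s + 2) := by
          rw [one_div_le (by linarith [one_le_backCF hd r (i - 1)]) (by positivity), one_div_div]
          exact hv
        rw [backCF_succ, hP.1, hP.2]
        calc ((s : ℝ) + 1 + 2) / (s + 1 + 1) = 2 - (s + 1) / (s + 2) := by field_simp; ring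
          _ ≤ _ := by push_cast; rw [neg_div]; linarith
    · exact le_trans (by rw [div_le_iff₀ (by positivity)]; linarith) (two_le_backCF hd (Or.inr hP))

lemma backCF_pos (hd : IsECFDigitSeq k ξ) (r : ℕ) (i : ℤ) :
    0 < backCF k ξ r i :=
  one_pos.trans_le (one_le_backCF hd r i)

lemma div_le_backCF_of_anchor (hd : IsECFDigitSeq k ξ) {j : ℤ}
    (hj : ¬ IsParabolicAt k ξ j ∨ ¬ IsParabolicAt k ξ (j - 1)) (s r : ℕ) :
    ((s : ℝ) + 3) / (s + 2) ≤ backCF k ξ r (j + s) := by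
  rcases hj with hj | hj
  · refine le_trans ?_ (div_le_backCF hd s r _ (Or.inr (by rwa [add_sub_cancel_right])))
    rw [div_le_div_iff₀ (by positivity) (by positivity)]; nlinarith
  · have := div_le_backCF hd (s + 1) r (j + s) (Or.inr (by convert hj using 2; push_cast; ring))
    push_cast at this; convert this using 2 <;> ring

lemma abs_backCF_succ_sub_backCF_succ (hd : IsECFDigitSeq k ξ)
    (a b : ℕ) (i : ℤ) :
    |backCF k ξ (a + 1) i - backCF k ξ (b + 1) i| =
      |backCF k ξ a (i - 1) - backCF k ξ b (i - 1)| /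
        (backCF k ξ a (i - 1) * backCF k ξ b (i - 1)) := by
  have ha := backCF_pos hd a (i - 1)
  have hb := backCF_pos hd b (i - 1)
  have hξ : |(ξ (i - 1) : ℝ)| = 1 := by rcases hd.sign (i - 1) with h | h <;> simp [h]
  have key : backCF k ξ (a + 1) i - backCF k ξ (b + 1) i =
      ξ (i - 1) * (backCF k ξ b (i - 1) - backCF k ξ a (i - 1)) /
        (backCF k ξ a (i - 1) * backCF k ξ b (i - 1)) := by
    rw [backCF_succ, backCF_succ]; field_simp; ring
  rw [key, abs_div, abs_mul, hξ, one_mul, abs_of_pos (mul_pos ha hb), abs_sub_comm]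

lemma abs_backCF_sub_backCF_add_le (hd : IsECFDigitSeq k ξ)
    (a m : ℕ) (i : ℤ) : |backCF k ξ a i - backCF k ξ (m + a) i| ≤ 1 / (a + 1) := by
  induction a generalizing i with
  | zero =>
    rcases m with _ | m
    · simp
    rw [Nat.cast_zero, zero_add, div_one, add_zero, backCF_succ, backCF_zero, sub_add_cancel_left,
      abs_neg]
    exact abs_sign_div_le_one hd (i - 1) (one_le_backCF hd m (i - 1))
  | succ a ih =>
    rw [← Nat.add_assoc, abs_backCF_succ_sub_backCF_succ hd]
    have hva := div_le_backCF hd a a (i - 1) (Or.inl le_rfl)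
    have hvb := one_le_backCF hd (m + a) (i - 1)
    calc _ ≤ 1 / ((a : ℝ) + 1) / ((a + 2) / (a + 1) * 1) := by
          gcongr
          · exact ih (i - 1)
          · exact (backCF_pos hd _ _).le
      _ = 1 / ((a + 1 : ℕ) + 1) := by push_cast; field_simp; ring

lemma cauchySeq_backCF (hd : IsECFDigitSeq k ξ) (i : ℤ) :
    CauchySeq fun r => backCF k ξ r i := by
  refine Metric.cauchySeq_iff'.2 fun ε hε => ?_
  obtain ⟨a, ha⟩ := exists_nat_one_div_lt hε
  refine ⟨a, fun r hr => ?_⟩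
  obtain ⟨m, rfl⟩ := Nat.exists_eq_add_of_le' hr
  rw [Real.dist_eq, abs_sub_comm]
  exact (abs_backCF_sub_backCF_add_le hd a m i).trans_lt ha

lemma abs_backCF_sub_limUnder_le (hd : IsECFDigitSeq k ξ)
    {a : ℕ} {i : ℤ} {B : ℝ} (h : ∀ m, |backCF k ξ a i - backCF k ξ (m + a) i| ≤ B) :
    |backCF k ξ a i - limUnder atTop (fun r => backCF k ξ r i)| ≤ B := by
  have hlim := (tendsto_add_atTop_iff_nat a).2 (cauchySeq_backCF hd i).tendsto_limUnder
  exact le_of_tendsto ((tendsto_const_nhds.sub hlim).abs) (Eventually.of_forall h)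

lemma one_le_limUnder_backCF (hd : IsECFDigitSeq k ξ) (i : ℤ) :
    1 ≤ limUnder atTop (fun r => backCF k ξ r i) :=
  ge_of_tendsto (cauchySeq_backCF hd i).tendsto_limUnder
    (Eventually.of_forall fun r => one_le_backCF hd r i)

/-- Past a non-parabolic anchor the contraction factors `((t + 2) / (t + 3))²` telescope. -/
lemma abs_backCF_add_sub_le_of_anchor (hd : IsECFDigitSeq k ξ) {j : ℤ}
    (hj : ¬ IsParabolicAt k ξ j ∨ ¬ IsParabolicAt k ξ (j - 1)) (a b s : ℕ) :
    |backCF k ξ (a + s) (j + s) - backCF k ξ (b + s) (j + s)| ≤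
      (2 / ((s : ℝ) + 2)) ^ 2 * |backCF k ξ a j - backCF k ξ b j| := by
  induction s with
  | zero => simp
  | succ s ih =>
    have hidx : j + ((s + 1 : ℕ) : ℤ) - 1 = j + s := by push_cast; ring
    rw [← Nat.add_assoc, ← Nat.add_assoc, abs_backCF_succ_sub_backCF_succ hd, hidx]
    have hva := div_le_backCF_of_anchor hd hj s (a + s)
    have hvb := div_le_backCF_of_anchor hd hj s (b + s)
    calc _ ≤ (2 / ((s : ℝ) + 2)) ^ 2 * |backCF k ξ a j - backCF k ξ b j| /
          ((s + 3) / (s + 2) * ((s + 3) / (s + 2))) := by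
          gcongr
          exact (backCF_pos hd _ _).le
      _ = (2 / (((s + 1 : ℕ) : ℝ) + 2)) ^ 2 * |backCF k ξ a j - backCF k ξ b j| := by
          push_cast; field_simp; ring

lemma cfQ_succ_eq_backCF_mul (hd : IsECFDigitSeq k ξ) (N : ℕ) :
    (cfQ (fun n : ℕ => k n) (fun n : ℕ => ξ n) (N + 1) : ℝ) =
      backCF k ξ N (N + 1) * cfQ (fun n : ℕ => k n) (fun n : ℕ => ξ n) N := by
  induction N with
  | zero => simp [cfQ, backCF_zero]
  | succ N ih =>
    have hv := (backCF_pos hd N (N + 1)).ne'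
    have hidx : ((N + 1 : ℕ) : ℤ) + 1 - 1 = N + 1 := by push_cast; ring
    have hrec : cfQ (fun n : ℕ => k n) (fun n : ℕ => ξ n) (N + 2) =
        2 * k (N + 2 : ℕ) * cfQ (fun n : ℕ => k n) (fun n : ℕ => ξ n) (N + 1) +
          ξ (N + 1 : ℕ) * cfQ (fun n : ℕ => k n) (fun n : ℕ => ξ n) N := rfl
    rw [backCF_succ, hidx, hrec]
    push_cast at ih ⊢
    rw [ih, show (N : ℤ) + 1 + 1 = N + 2 by ring]
    field_simp

lemma cfQ_eq_prod_backCF (hd : IsECFDigitSeq k ξ) (N : ℕ) :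
    (cfQ (fun n : ℕ => k n) (fun n : ℕ => ξ n) N : ℝ) = ∏ m ∈ range N, backCF k ξ m (m + 1) := by
  induction N with
  | zero => simp [cfQ]
  | succ N ih => rw [cfQ_succ_eq_backCF_mul hd, ih, prod_range_succ, mul_comm]

end BackwardContinuedFraction

section Decoding

variable (ω : DSpace)

lemma one_le_mF (n : ℤ) : 1 ≤ mF ω n := (ω.2 n).1

lemma eF_eq_one_or (n : ℤ) : eF ω n = 1 ∨ eF ω n = -1 := (ω.2 n).2.1

lemma not_mF_eq_one_and_eF_eq_neg_one (n : ℤ) : ¬ (mF ω n = 1 ∧ eF ω n = -1) := (ω.2 n).2.2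

lemma one_le_kF (i : ℤ) : 1 ≤ kF ω i := by
  unfold kF; split
  · exact one_le_mF ω _
  · exact le_rfl

lemma xiF_eq_one_or (i : ℤ) : xiF ω i = 1 ∨ xiF ω i = -1 := by
  unfold xiF; split
  · exact eF_eq_one_or ω _
  · exact Or.inr rfl

lemma isECFDigitSeq (ω : DSpace) : IsECFDigitSeq (kF ω) (xiF ω) := ⟨one_le_kF ω, xiF_eq_one_or ω⟩

lemma nuF_of_nonpos {n : ℤ} (hn : n ≤ 0) :
    nuF ω n = 1 - ∑ j ∈ range (-n).toNat, ((hF ω (-(j : ℤ)) : ℤ) + 1) := by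
  rcases hn.lt_or_eq with hn | rfl
  · simp [nuF, hn.not_ge]
  · simp [nuF]

lemma nuF_zero : nuF ω 0 = 1 := by simp [nuF]

lemma nuF_succ (n : ℤ) : nuF ω (n + 1) = nuF ω n + ((hF ω (n + 1) : ℤ) + 1) := by
  rcases lt_or_ge n 0 with hn | hn
  · rw [nuF_of_nonpos ω hn.le, nuF_of_nonpos ω (by omega),
      show (-n).toNat = (-(n + 1)).toNat + 1 by omega, sum_range_succ,
      show -(((-(n + 1)).toNat : ℕ) : ℤ) = n + 1 by omega]
    ring
  · rw [nuF, nuF, if_pos hn, if_pos (by omega), show (n + 1).toNat = n.toNat + 1 by omega,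
      sum_Icc_succ_top (by omega), show ((n.toNat + 1 : ℕ) : ℤ) = n + 1 by omega]
    ring

lemma nuF_strictMono : StrictMono (nuF ω) :=
  strictMono_int_of_lt_succ fun n => by rw [nuF_succ]; omega

/-- Number of ECF digits encoded by the symbols `σ_1, …, σ_n`, i.e. `ν_n - 1`. -/
def digitCount (n : ℕ) : ℕ := ∑ j ∈ range n, (hF ω (j + 1) + 1)

lemma nuF_natCast (n : ℕ) : nuF ω n = digitCount ω n + 1 := by
  induction n with
  | zero => simp [nuF, digitCount]
  | succ n ih =>
    rw [Nat.cast_succ, nuF_succ, ih, digitCount, digitCount, sum_range_succ]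
    push_cast; ring

lemma digitCount_succ (n : ℕ) : digitCount ω (n + 1) = digitCount ω n + (hF ω (n + 1) + 1) := by
  rw [digitCount, digitCount, sum_range_succ]

end Decoding

section Shift

open Function

open Classical in
lemma dite_exists_sub_one_eq_of_injective {α : Type*} {ν : ℤ → ℤ} (hν : Injective ν)
    (F : ℤ → α) (d : α) {n i : ℤ} (h : ν n - 1 = i) :
    (if h : ∃ n, ν n - 1 = i then F h.choose else d) = F n := by
  have hex : ∃ n, ν n - 1 = i := ⟨n, h⟩
  rw [dif_pos hex, hν (by linarith [hex.choose_spec] : ν hex.choose = ν n)]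

open Classical in
lemma dite_exists_sub_one_shift {α : Type*} {ν ν' : ℤ → ℤ} (hν : Injective ν) (hν' : Injective ν')
    {c : ℤ} (hc : ∀ n, ν' n = ν (n + 1) - c) (F : ℤ → α) (d : α) (i : ℤ) :
    (if h : ∃ n, ν' n - 1 = i then F (h.choose + 1) else d) =
      (if h : ∃ n, ν n - 1 = i + c then F h.choose else d) := by
  by_cases h : ∃ n, ν' n - 1 = i
  · obtain ⟨n, hn⟩ := h
    rw [dite_exists_sub_one_eq_of_injective hν' (fun n => F (n + 1)) d hn,
      dite_exists_sub_one_eq_of_injective hν F d (n := n + 1) (by rw [hc] at hn; omega)]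
  · rw [dif_neg h, dif_neg]
    rintro ⟨n, hn⟩
    exact h ⟨n - 1, by rw [hc, sub_add_cancel]; omega⟩

variable (ω : DSpace)

lemma kF_nuF_sub_one (n : ℤ) : kF ω (nuF ω n - 1) = mF ω n :=
  dite_exists_sub_one_eq_of_injective (nuF_strictMono ω).injective (mF ω) 1 rfl

lemma xiF_nuF_sub_one (n : ℤ) : xiF ω (nuF ω n - 1) = eF ω n :=
  dite_exists_sub_one_eq_of_injective (nuF_strictMono ω).injective (eF ω) (-1) rfl

lemma nuF_shiftD (n : ℤ) : nuF (shiftD ω) n = nuF ω (n + 1) - (hF ω 1 + 1) := by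
  have hstep (n : ℤ) : nuF (shiftD ω) (n + 1) = nuF (shiftD ω) n + ((hF ω (n + 1 + 1) : ℤ) + 1) :=
    nuF_succ (shiftD ω) n
  induction n using Int.induction_on with
  | zero =>
    have h1 := nuF_succ ω 0
    rw [zero_add] at h1
    rw [zero_add, h1, nuF_zero, nuF_zero]
    ring
  | succ n ih => rw [hstep, ih, nuF_succ ω (n + 1)]; ring
  | pred n ih =>
    have h1 := hstep (-n - 1)
    have h2 := nuF_succ ω (-n)
    rw [sub_add_cancel] at h1 ⊢
    omega

lemma kF_shiftD (i : ℤ) : kF (shiftD ω) i = kF ω (i + (hF ω 1 + 1)) :=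
  dite_exists_sub_one_shift (nuF_strictMono ω).injective (nuF_strictMono (shiftD ω)).injective
    (nuF_shiftD ω) (mF ω) 1 i

lemma xiF_shiftD (i : ℤ) : xiF (shiftD ω) i = xiF ω (i + (hF ω 1 + 1)) :=
  dite_exists_sub_one_shift (nuF_strictMono ω).injective (nuF_strictMono (shiftD ω)).injective
    (nuF_shiftD ω) (eF ω) (-1) i

lemma yF_shiftD (i : ℤ) : yF (shiftD ω) i = yF ω (i + (hF ω 1 + 1)) := by
  have hk : kF (shiftD ω) = fun i => kF ω (i + (hF ω 1 + 1)) := funext (kF_shiftD ω)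
  have hξ : xiF (shiftD ω) = fun i => xiF ω (i + (hF ω 1 + 1)) := funext (xiF_shiftD ω)
  simp only [yF, hk, hξ, backCF_comp_add]

end Shift

section ForwardPoint

variable (ω : DSpace)

lemma not_isParabolicAt_nuF_or_sub_one (n : ℤ) :
    ¬ IsParabolicAt (kF ω) (xiF ω) (nuF ω n) ∨ ¬ IsParabolicAt (kF ω) (xiF ω) (nuF ω n - 1) := by
  rcases eF_eq_one_or ω n with he | he
  · left
    rintro ⟨-, h⟩
    rw [xiF_nuF_sub_one, he] at h
    exact absurd h (by decide)
  · right
    rintro ⟨h, -⟩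
    rw [kF_nuF_sub_one] at h
    exact not_mF_eq_one_and_eF_eq_neg_one ω n ⟨h, he⟩

lemma qPlus_eq_cfQ : qPlus ω = cfQ (fun n : ℕ => kF ω n) (fun n : ℕ => xiF ω n) := by
  set q := cfQ (fun n : ℕ => kF ω n) (fun n : ℕ => xiF ω n)
  suffices h : ∀ N, qPlus ω N = q N ∧ qPlus ω (N + 1) = q (N + 1) from funext fun N => (h N).1
  intro N
  induction N with
  | zero => exact ⟨rfl, rfl⟩
  | succ N ih =>
    refine ⟨ih.2, ?_⟩
    simp only [qPlus, cfQ, kPlus, xiPlus, Nat.succ_ne_zero, if_false] at ih ⊢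
    rw [ih.1, ih.2]
    rfl

lemma log_qPlus (N : ℕ) :
    Real.log (qPlus ω N) = ∑ m ∈ range N, Real.log (backCF (kF ω) (xiF ω) m (m + 1)) := by
  rw [qPlus_eq_cfQ, cfQ_eq_prod_backCF (isECFDigitSeq ω), Real.log_prod]
  exact fun m _ => (backCF_pos (isECFDigitSeq ω) m _).ne'

lemma birkhoffPsi_succ (n : ℕ) : birkhoffPsi ω (n + 1) = psiF ω + birkhoffPsi (shiftD ω) n := by
  simp only [birkhoffPsi, sum_range_succ', Function.iterate_succ_apply, Function.iterate_zero_apply]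
  ring

lemma psiF_eq_sum : psiF ω = ∑ s ∈ range (hF ω 1 + 1), Real.log (yF ω (s + 2)) := by
  have hnu : nuF ω 1 = hF ω 1 + 2 := by
    have := nuF_succ ω 0
    rw [zero_add, nuF_zero] at this
    omega
  rw [psiF, hnu, Int.Icc_eq_finset_map, sum_map,
    show ((hF ω 1 : ℤ) + 2 + 1 - 2).toNat = hF ω 1 + 1 by omega]
  exact sum_congr rfl fun s _ => by simp [add_comm]

lemma digitCount_succ_eq_add_shiftD (n : ℕ) :
    digitCount ω (n + 1) = (hF ω 1 + 1) + digitCount (shiftD ω) n := by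
  rw [digitCount, sum_range_succ', add_comm]
  rfl

lemma birkhoffPsi_eq_sum (n : ℕ) :
    birkhoffPsi ω n = ∑ s ∈ range (digitCount ω n), Real.log (yF ω (s + 2)) := by
  induction n generalizing ω with
  | zero => simp [birkhoffPsi, digitCount]
  | succ n ih =>
    rw [birkhoffPsi_succ, ih, psiF_eq_sum, digitCount_succ_eq_add_shiftD,
      sum_range_add _ (hF ω 1 + 1)]
    congr 1
    exact sum_congr rfl fun s _ => by rw [yF_shiftD]; push_cast; ring_nf

end ForwardPoint

section Approximation

variable (ω : DSpace)

local notation "V" => backCF (kF ω) (xiF ω)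

/-- Each symbol ends with a non-parabolic anchor, so it contributes a contraction factor
`(2 / (h + 3))² ≤ 4 / 9`. -/
lemma abs_backCF_sub_le_four_ninths_pow (a b n : ℕ) :
    |V (a + digitCount ω n) (digitCount ω n + 1) - V (b + digitCount ω n) (digitCount ω n + 1)| ≤
      (4 / 9) ^ n * |V a 1 - V b 1| := by
  induction n with
  | zero => simp [digitCount]
  | succ n ih =>
    have hj := not_isParabolicAt_nuF_or_sub_one ω n
    rw [nuF_natCast] at hj
    have hblock := abs_backCF_add_sub_le_of_anchor (isECFDigitSeq ω) hj
      (a + digitCount ω n) (b + digitCount ω n) (hF ω (n + 1) + 1)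
    have hfac : (2 / (((hF ω (n + 1) + 1 : ℕ) : ℝ) + 2)) ^ 2 ≤ 4 / 9 := by
      rw [div_pow, div_le_iff₀ (by positivity)]
      push_cast
      nlinarith [(hF ω (n + 1)).cast_nonneg (α := ℝ)]
    have hidx : ((digitCount ω n + (hF ω (n + 1) + 1) : ℕ) : ℤ) + 1 =
        (digitCount ω n : ℤ) + 1 + ((hF ω (n + 1) + 1 : ℕ) : ℤ) := by push_cast; ring
    rw [digitCount_succ, ← Nat.add_assoc a, ← Nat.add_assoc b, hidx]
    calc _ ≤ _ := hblock
      _ ≤ 4 / 9 * ((4 / 9) ^ n * |V a 1 - V b 1|) := by gcongr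
      _ = _ := by ring

lemma abs_backCF_sub_yF_le (n t : ℕ) :
    |V (digitCount ω n + t + 1) ((digitCount ω n + t : ℕ) + 2) -
        yF ω ((digitCount ω n + t : ℕ) + 2)| ≤ (4 / 9) ^ n * (2 / ((t : ℝ) + 3)) ^ 2 := by
  refine abs_backCF_sub_limUnder_le (isECFDigitSeq ω) fun m => ?_
  have hj := not_isParabolicAt_nuF_or_sub_one ω n
  rw [nuF_natCast] at hj
  have hblock := abs_backCF_add_sub_le_of_anchor (isECFDigitSeq ω) hj
    (digitCount ω n) (m + digitCount ω n) (t + 1)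
  have hchain := abs_backCF_sub_le_four_ninths_pow ω 0 m n
  have hstart := abs_backCF_sub_backCF_add_le (isECFDigitSeq ω) 0 m 1
  rw [zero_add] at hchain
  rw [add_zero, Nat.cast_zero, zero_add, div_one] at hstart
  have hidx : ((digitCount ω n + t : ℕ) : ℤ) + 2 =
      (digitCount ω n : ℤ) + 1 + ((t + 1 : ℕ) : ℤ) := by push_cast; ring
  rw [hidx, show m + (digitCount ω n + t + 1) = m + digitCount ω n + (t + 1) by omega]
  calc _ ≤ _ := hblock
    _ ≤ (2 / (((t + 1 : ℕ) : ℝ) + 2)) ^ 2 * ((4 / 9) ^ n * 1) := by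
        gcongr
        exact hchain.trans (mul_le_mul_of_nonneg_left hstart (by positivity))
    _ = _ := by push_cast; ring

/-- The paper's `g_n`, except that `q̂_n` is read as `q_{ν_n}` also for `n = 0`
(where `qhatF` is `1` by convention). -/
noncomputable def gApprox (n : ℕ) : ℝ := Real.log (qPlus ω (digitCount ω n + 1)) - birkhoffPsi ω n

lemma log_qhatF_sub_birkhoffPsi {n : ℕ} (hn : n ≠ 0) :
    Real.log (qhatF ω n) - birkhoffPsi ω n = gApprox ω n := by
  rw [qhatF, if_neg hn, nuF_natCast,
    show ((digitCount ω n : ℤ) + 1).toNat = digitCount ω n + 1 by omega]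
  rfl

lemma gApprox_succ_sub (n : ℕ) :
    gApprox ω (n + 1) - gApprox ω n = ∑ t ∈ range (hF ω (n + 1) + 1),
      (Real.log (V (digitCount ω n + t + 1) ((digitCount ω n + t : ℕ) + 2)) -
        Real.log (yF ω ((digitCount ω n + t : ℕ) + 2))) := by
  simp only [gApprox, log_qPlus, birkhoffPsi_eq_sum]
  rw [digitCount_succ, Nat.add_right_comm (digitCount ω n), sum_range_add _ (digitCount ω n + 1),
    sum_range_add _ (digitCount ω n) (hF ω (n + 1) + 1), sum_sub_distrib]
  have hV (t : ℕ) : V (digitCount ω n + 1 + t) ((digitCount ω n + 1 + t : ℕ) + 1) =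
      V (digitCount ω n + t + 1) ((digitCount ω n + t : ℕ) + 2) := by
    rw [Nat.add_right_comm]; push_cast; ring_nf
  simp only [hV]
  ring

lemma abs_gApprox_succ_sub_le (n : ℕ) : |gApprox ω (n + 1) - gApprox ω n| ≤ 2 * (4 / 9) ^ n := by
  rw [gApprox_succ_sub]
  calc _ ≤ ∑ t ∈ range (hF ω (n + 1) + 1), (4 / 9) ^ n * (2 / ((t : ℝ) + 3)) ^ 2 := by
        refine (abs_sum_le_sum_abs _ _).trans (sum_le_sum fun t _ => ?_)
        refine (abs_log_sub_log_le (one_le_backCF (isECFDigitSeq ω) _ _)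
          (one_le_limUnder_backCF (isECFDigitSeq ω) _)).trans ?_
        exact abs_backCF_sub_yF_le ω n t
    _ = (4 / 9) ^ n * ∑ t ∈ range (hF ω (n + 1) + 1), (2 / ((t : ℝ) + 3)) ^ 2 := (mul_sum ..).symm
    _ ≤ (4 / 9) ^ n * 2 := by gcongr; exact sum_range_two_div_sq_le _
    _ = _ := mul_comm _ _

end Approximation

open Filter in
/-- Approximation of `log q̂_n(ω̂⁺)` by Birkhoff sums of the roof function: there are a
function `g : D → ℝ` and a constant `C > 0` with
`|log q̂_n(ω̂⁺) − S_n(ψ)(ω̂) − g(ω̂)| ≤ C·3^{−n/3}` for all `ω̂ ∈ D` and `n ≥ 4`; in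
particular `log q̂_n(ω̂⁺) − S_n(ψ)(ω̂) → g(ω̂)` uniformly and exponentially fast. -/
theorem log_qhat_birkhoff_approx :
    ∃ g : DSpace → ℝ, ∃ C : ℝ, 0 < C ∧
      (∀ ω : DSpace, ∀ n : ℕ, 4 ≤ n →
        |Real.log (qhatF ω n : ℝ) - birkhoffPsi ω n - g ω| ≤
          C * (3 : ℝ) ^ (-(n : ℝ) / 3)) ∧
      (∀ ω : DSpace,
        Tendsto (fun n : ℕ => Real.log (qhatF ω n : ℝ) - birkhoffPsi ω n)
          atTop (nhds (g ω))) := by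
  have hstep (ω : DSpace) (n : ℕ) : dist (gApprox ω n) (gApprox ω (n + 1)) ≤ 2 * (4 / 9) ^ n := by
    rw [dist_comm, Real.dist_eq]; exact abs_gApprox_succ_sub_le ω n
  have hlim (ω : DSpace) : Tendsto (gApprox ω) atTop (𝓝 (limUnder atTop (gApprox ω))) :=
    (cauchySeq_of_le_geometric _ _ (by norm_num) (hstep ω)).tendsto_limUnder
  refine ⟨fun ω => limUnder atTop (gApprox ω), 4, by norm_num, fun ω n hn => ?_, fun ω => ?_⟩
  · have hdist := dist_le_of_le_geometric_of_tendsto _ _ (by norm_num) (hstep ω) (hlim ω) n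
    rw [Real.dist_eq] at hdist
    rw [log_qhatF_sub_birkhoffPsi ω (by omega)]
    calc _ ≤ 2 * (4 / 9 : ℝ) ^ n / (1 - 4 / 9) := hdist
      _ = 18 / 5 * (4 / 9) ^ n := by ring
      _ ≤ 4 * 3 ^ (-(n : ℝ) / 3) := by gcongr; norm_num; exact four_ninths_pow_le_rpow n
  · exact (hlim ω).congr' ((eventually_ge_atTop 1).mono fun n hn =>
      (log_qhatF_sub_birkhoffPsi ω (by omega)).symm)
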